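/- Let q₀ > 0, θ ∈ ℝ, and let M be an invertible 2×2 complex matrix with M₂₁ = e^{−2iθ} M₁₂ and det M = 1. Set S = σ₂·e^{−iθσ₃} where σ₂ = [[0,−i],[i,0]] and e^{−iθσ₃} = diag(e^{−iθ}, e^{iθ}), and E(z) = I₂ + (q₀/z)·S·M⁻¹ for z ≠ 0. Then for every z ∈ ℂ with z ∉ {0, q₀, −q₀}, one has (z/q₀)·E(q₀²/z)⁻¹·E(z) = M·S. -/
import Mathlib


open Complex Matrix

/-- The matrix `S = σ₂·e^{−iθσ₃}`. -/
noncomputable def Smat (θ : ℝ) : Matrix (Fin 2) (Fin 2) ℂ :=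
  !![0, -Complex.I; Complex.I, 0] *
    !![Complex.exp (-(Complex.I * θ)), 0; 0, Complex.exp (Complex.I * θ)]

/-- The matrix `E(z) = I₂ + (q₀/z)·S·M⁻¹`. -/
noncomputable def Emat (q₀ θ : ℝ) (M : Matrix (Fin 2) (Fin 2) ℂ) (z : ℂ) :
    Matrix (Fin 2) (Fin 2) ℂ :=
  1 + ((q₀ : ℂ) / z) • (Smat θ * M⁻¹)

/-- under `M₂₁ = e^{−2iθ}M₁₂` and `det M = 1`, for `z ∉ {0, q₀, −q₀}` one has
`(z/q₀)·E(q₀²/z)⁻¹·E(z) = M·S`. -/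
theorem Emat_symmetry_identity (q₀ θ : ℝ) (hq₀ : 0 < q₀) (M : Matrix (Fin 2) (Fin 2) ℂ)
    (hM : IsUnit M.det)
    (h21 : M 1 0 = Complex.exp (-(2 * Complex.I * θ)) * M 0 1) (hdet : M.det = 1) :
    ∀ z : ℂ, z ≠ 0 → z ≠ (q₀ : ℂ) → z ≠ -(q₀ : ℂ) →
      (z / (q₀ : ℂ)) • ((Emat q₀ θ M ((q₀ : ℂ) ^ 2 / z))⁻¹ * Emat q₀ θ M z) =
        M * Smat θ := by
  intro z hz hz1 hz2
  have hq : (q₀ : ℂ) ≠ 0 := by exact_mod_cast hq₀.ne'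
  have hexp : Complex.exp (Complex.I * θ) * Complex.exp (-(2 * Complex.I * θ)) =
      Complex.exp (-(Complex.I * θ)) := by
    rw [← Complex.exp_add]; ring_nf
  have hexp0 : Complex.exp (Complex.I * θ) * Complex.exp (-(Complex.I * θ)) = 1 := by
    rw [← Complex.exp_add]; simp
  have hexp' : Complex.exp (Complex.I * θ) * Complex.exp (-(Complex.I * θ * 2)) =
      Complex.exp (-(Complex.I * θ)) := by
    rw [← Complex.exp_add]; ring_nf
  have hMinv : M⁻¹ = M.adjugate := by
    rw [Matrix.inv_def, hdet, Ring.inverse_one, one_smul]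
  have hSS : Smat θ * Smat θ = 1 := by
    rw [← Matrix.ext_iff]
    simp only [Fin.forall_fin_two]
    refine ⟨⟨?_, ?_⟩, ?_, ?_⟩ <;>
        simp [Smat, Matrix.mul_apply, Fin.sum_univ_two] <;>
      linear_combination (norm := (ring_nf; done))
        (-(Complex.exp (Complex.I * θ) * Complex.exp (-(Complex.I * θ)))) *
          Complex.I_sq + hexp0
  have hSM : Smat θ * M⁻¹ = M * Smat θ := by
    rw [hMinv, Matrix.adjugate_fin_two, ← Matrix.ext_iff]
    simp only [Fin.forall_fin_two]
    refine ⟨⟨?_, ?_⟩, ?_, ?_⟩ <;>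
      simp [Smat, Matrix.mul_apply, Fin.sum_univ_two, h21]
    all_goals
      first
        | ring1
        | linear_combination (norm := (ring_nf; done)) (Complex.I * M 0 1) * hexp'
        | linear_combination (norm := (ring_nf; done)) -(Complex.I * M 0 1) * hexp'
  have hA2 : (M * Smat θ) * (M * Smat θ) = 1 := by
    have h1 : Smat θ * M⁻¹ * M = Smat θ := by
      rw [Matrix.mul_assoc, Matrix.nonsing_inv_mul M hM, Matrix.mul_one]
    calc (M * Smat θ) * (M * Smat θ) = (Smat θ * M⁻¹) * M * Smat θ := by
          rw [hSM]; simp only [Matrix.mul_assoc]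
      _ = Smat θ * Smat θ := by rw [h1]
      _ = 1 := hSS
  set t : ℂ := z / q₀ with ht
  set A : Matrix (Fin 2) (Fin 2) ℂ := M * Smat θ with hA
  have htz : t ≠ 0 := div_ne_zero hz hq
  have hzq : z = t * q₀ := by rw [ht]; field_simp
  have ht2 : 1 - t ^ 2 ≠ 0 := by
    intro h
    have h' : (t - 1) * (t + 1) = 0 := by linear_combination -h
    rcases mul_eq_zero.mp h' with h1 | h1
    · exact hz1 (by rw [hzq, sub_eq_zero.mp h1, one_mul])
    · exact hz2 (by rw [hzq, eq_neg_of_add_eq_zero_left h1]; ring)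
  have hEw : Emat q₀ θ M ((q₀ : ℂ) ^ 2 / z) = 1 + t • A := by
    have hc : (q₀ : ℂ) / ((q₀ : ℂ) ^ 2 / z) = t := by
      rw [ht]; field_simp
    rw [Emat, hSM, hc]
  have hEz : Emat q₀ θ M z = 1 + t⁻¹ • A := by
    have hc : (q₀ : ℂ) / z = t⁻¹ := by rw [ht, inv_div]
    rw [Emat, hSM, hc]
  clear_value t
  have key : (1 + t • A) * (1 - t • A) = (1 - t ^ 2) • (1 : Matrix (Fin 2) (Fin 2) ℂ) := by
    simp only [add_mul, mul_sub, one_mul, mul_one, smul_mul_assoc, mul_smul_comm, smul_smul,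
      hA2]
    module
  have hprod : (1 + t • A) * ((1 - t ^ 2)⁻¹ • (1 - t • A)) = 1 := by
    rw [mul_smul_comm, key, smul_smul, inv_mul_cancel₀ ht2, one_smul]
  have hinv : (Emat q₀ θ M ((q₀ : ℂ) ^ 2 / z))⁻¹ = (1 - t ^ 2)⁻¹ • (1 - t • A) := by
    rw [hEw]; exact Matrix.inv_eq_right_inv hprod
  have key2 : (1 - t • A) * (1 + t⁻¹ • A) = (t⁻¹ - t) • A := by
    simp only [sub_mul, mul_add, one_mul, mul_one, smul_mul_assoc, mul_smul_comm, smul_smul,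
      hA2, mul_inv_cancel₀ htz, inv_mul_cancel₀ htz]
    match_scalars <;> field_simp
    all_goals ring1
  have hs : t * (1 - t ^ 2)⁻¹ * (t⁻¹ - t) = 1 := by
    rw [mul_comm t, mul_assoc,
      show t * (t⁻¹ - t) = 1 - t ^ 2 by rw [mul_sub, mul_inv_cancel₀ htz]; ring]
    exact inv_mul_cancel₀ ht2
  rw [hinv, hEz, smul_mul_assoc, key2, smul_smul, smul_smul, hs, one_smul]
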